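/- Every dense linear subspace of ℓ∞ has (Hamel) dimension 𝔠. -/

import Mathlib

/-!
The indicators of subsets of `ℕ` are `𝔠` points of `ℓ∞` at mutual distance `1`, so every dense
subset of `ℓ∞` has at least `𝔠` elements. If `B` is a Hamel basis of a dense subspace `D`, the
`ℚ`-span of `B` is still dense (rationals are dense in the reals) and has at most `max #B ℵ₀`
elements; since `ℵ₀ < 𝔠` this forces `𝔠 ≤ #B`, while `#B ≤ #ℓ∞ = 𝔠`.
-/

open Cardinal
open scoped lp ENNReal

universe u v

theorem Cardinal.mk_finsupp_rat_le (α : Type u) : #(α →₀ ℚ) ≤ max #α ℵ₀ := by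
  cases isEmpty_or_nonempty α <;> simp

theorem Submodule.mk_span_rat_le {M : Type u} [AddCommGroup M] [Module ℚ M] (s : Set M) :
    #(span ℚ s) ≤ max #s ℵ₀ := by
  conv_lhs => rw [← Subtype.range_coe (s := s), ← Finsupp.range_linearCombination]
  exact mk_range_le.trans (mk_finsupp_rat_le s)

theorem Submodule.span_subset_closure_span_rat {M : Type*} [AddCommGroup M] [Module ℝ M]
    [Module ℚ M] [TopologicalSpace M] [ContinuousAdd M] [ContinuousSMul ℝ M] (s : Set M) :
    (span ℝ s : Set M) ⊆ closure (span ℚ s) := by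
  intro x hx
  induction hx using Submodule.span_induction with
  | mem x hx => exact subset_closure (subset_span hx)
  | zero => exact subset_closure (zero_mem _)
  | add x y _ _ hx hy =>
    exact map_mem_closure₂ continuous_add hx hy fun a ha b hb => add_mem ha hb
  | smul r x _ hx =>
    refine map_mem_closure₂ continuous_smul (Rat.denseRange_cast r) hx ?_
    rintro _ ⟨q, rfl⟩ y hy
    rw [ratCast_smul_eq ℝ ℚ]
    exact smul_mem _ _ hy

theorem Submodule.exists_subset_closure_mk_le_max_rank {M : Type u} [AddCommGroup M]
    [Module ℝ M] [Module ℚ M] [TopologicalSpace M] [ContinuousAdd M] [ContinuousSMul ℝ M]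
    (D : Submodule ℝ M) :
    ∃ s : Set M, (D : Set M) ⊆ closure s ∧ #s ≤ max (Module.rank ℝ D) ℵ₀ := by
  obtain ⟨B, -, hspan, hB⟩ := exists_linearIndependent ℝ (D : Set M)
  rw [span_eq] at hspan
  refine ⟨span ℚ B, ?_, ?_⟩
  · rw [← hspan]
    exact span_subset_closure_span_rat B
  · rw [← hspan, rank_span_set hB]
    exact mk_span_rat_le B

theorem Dense.lift_mk_le_of_pairwise_le_dist {X : Type u} {ι : Type v} [PseudoMetricSpace X]
    {s : Set X} (hs : Dense s) {x : ι → X} {ε : ℝ} (hε : 0 < ε)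
    (hx : Pairwise fun i j => ε ≤ dist (x i) (x j)) : lift.{u} #ι ≤ lift.{v} #s := by
  choose y hys hy using fun i => hs.exists_dist_lt (x i) (half_pos hε)
  refine lift_mk_le_lift_mk_of_injective (f := fun i => (⟨y i, hys i⟩ : s)) fun i j hij => ?_
  by_contra hne
  have hyij : y i = y j := congrArg Subtype.val hij
  exact (hx hne).not_gt <| calc
    dist (x i) (x j) ≤ dist (x i) (y i) + dist (x j) (y i) := dist_triangle_right _ _ _
    _ < ε / 2 + ε / 2 := add_lt_add (hy i) (hyij ▸ hy j)
    _ = ε := add_halves ε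

noncomputable def lpIndicator {α : Type*} (A : Set α) : ℓ^∞(α, ℝ) :=
  ⟨A.indicator 1, memℓp_infty ⟨1, by
    rintro _ ⟨n, rfl⟩
    by_cases h : n ∈ A <;> simp [h]⟩⟩

theorem pairwise_one_le_dist_lpIndicator {α : Type*} :
    Pairwise fun A B : Set α => 1 ≤ dist (lpIndicator A) (lpIndicator B) := by
  intro A B hAB
  obtain ⟨n, hn⟩ : ∃ n, ¬(n ∈ A ↔ n ∈ B) := by
    by_contra! h
    exact hAB (Set.ext h)
  rw [dist_eq_norm]
  refine le_trans ?_ (lp.norm_apply_le_norm ENNReal.top_ne_zero (lpIndicator A - lpIndicator B) n)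
  have hsub : (lpIndicator A - lpIndicator B : ℓ^∞(α, ℝ)) n = A.indicator 1 n - B.indicator 1 n :=
    rfl
  rw [hsub]
  by_cases hA : n ∈ A <;> by_cases hB : n ∈ B <;> simp_all

theorem continuum_le_mk_of_dense {s : Set ℓ^∞(ℕ, ℝ)} (hs : Dense s) : 𝔠 ≤ #s := by
  simpa using hs.lift_mk_le_of_pairwise_le_dist one_pos pairwise_one_le_dist_lpIndicator

theorem mk_lp_infty_le_continuum : #ℓ^∞(ℕ, ℝ) ≤ 𝔠 :=
  (mk_le_of_injective (β := ℕ → ℝ) Subtype.val_injective).trans_eq <| by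
    simp [mk_real, continuum_power_aleph0]

/-- Papathanasiou: every dense linear subspace of `ℓ∞` has Hamel
dimension `𝔠`. -/
theorem stmt18 (D : Submodule ℝ (lp (fun _ : ℕ => ℝ) ⊤))
    (hD : Dense (D : Set (lp (fun _ : ℕ => ℝ) ⊤))) :
    Module.rank ℝ D = Cardinal.continuum := by
  obtain ⟨s, hDs, hs⟩ := D.exists_subset_closure_mk_le_max_rank
  have hcont : 𝔠 ≤ max (Module.rank ℝ D) ℵ₀ :=
    (continuum_le_mk_of_dense (hD.mono hDs).of_closure).trans hs
  refine le_antisymm ?_ ((le_max_iff.1 hcont).resolve_right aleph0_lt_continuum.not_ge)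
  calc Module.rank ℝ D ≤ #D := rank_le_card ℝ D
    _ ≤ #ℓ^∞(ℕ, ℝ) := mk_subtype_le _
    _ ≤ 𝔠 := mk_lp_infty_le_continuum
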